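/- Let h_n be a polynomial with real coefficients, bounded uniformly on compact sets, with h_n(1) ≥ h₀ > 0, and define ξ_n(z) = −πi∫₁^z ψ_n(s)ds where ψ_n(z) = (1/(2πi))·((z−1)^{1/2}/z^{1/2})·h_n(z). Then the function φ̂_n(z) = (2/h_n(1))·(−(3/2)ξ_n(z))/(z−1)^{3/2}, a priori defined on ℂ\(−∞,1], extends to an analytic function on ℂ\(−∞,0] with φ̂_n(1) = 1, and there exists C > 0 (independent of n) with |φ̂_n(z) − 1| ≤ C|z−1| for |z−1| ≤ 1/4. -/

import Mathlib

/-- The complexified equilibrium density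
`ψ(z) = (1/(2πi))((z-1)^{1/2}/z^{1/2}) P(z)` (principal branches). -/
noncomputable def psiFun (P : Polynomial ℝ) (z : ℂ) : ℂ :=
  (1 / (2 * (Real.pi : ℂ) * Complex.I)) * ((z - 1) ^ ((1:ℂ)/2) / z ^ ((1:ℂ)/2)) *
    Polynomial.aeval z P

/-- `ξ(z) = -πi ∫₁^z ψ(s) ds`, the integral taken along the straight segment
from `1` to `z` (which avoids `(-∞,1]` for `z ∉ (-∞,1]`). -/
noncomputable def xiFun (P : Polynomial ℝ) (z : ℂ) : ℂ :=
  (-(Real.pi : ℂ) * Complex.I) * ((z - 1) * ∫ t in (0:ℝ)..1, psiFun P (1 + t * (z - 1)))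

/-- `φ̂(z) = (2/P(1)) · (-(3/2)ξ(z))/(z-1)^{3/2}`. -/
noncomputable def phiHat (P : Polynomial ℝ) (z : ℂ) : ℂ :=
  (2 / ((P.eval 1 : ℝ) : ℂ)) * (-(3/2 : ℂ) * xiFun P z) / ((z - 1) ^ ((3:ℂ)/2))

/-!
Substituting `s = 1 + t (z - 1)` in `ξ` gives `ξ(z) = -(1/2) (z-1)^{3/2} ∫₀¹ √t g(1 + t(z-1)) dt`
with `g(w) = h(w)/w^{1/2}`, so `φ̂(z) = (3/(2h(1))) ∫₀¹ √t g(1 + t(z-1)) dt`. The right-hand side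
no longer involves `(z-1)^{1/2}`: it is holomorphic wherever the segment `[1, z]` avoids
`(-∞, 0]`, and equals `1` at `z = 1` because `∫₀¹ √t dt = 2/3`. On `|w - 1| < 1/2` we have
`|g| ≤ 2M` with `M` the uniform bound for `h` there, so the Schwarz lemma makes `g` Lipschitz at
`1` with constant `8M`, which yields `|φ̂(z) - 1| ≤ (12M/h₀) |z - 1|` for `|z - 1| ≤ 1/4`.
-/

open Complex MeasureTheory Set Metric

theorem StarConvex.continuousOn_comp_segment {X : Type*} [TopologicalSpace X] {U : Set ℂ}
    {c : ℂ} (hcU : StarConvex ℝ c U) {f : ℂ → X} (hf : ContinuousOn f U) {z : ℂ} (hz : z ∈ U) :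
    ContinuousOn (fun t : ℝ => f (c + t * (z - c))) (uIcc 0 1) :=
  hf.comp (by fun_prop) fun t ht => by
    rw [uIcc_of_le zero_le_one] at ht
    simpa [real_smul] using hcU.add_smul_sub_mem hz ht.1 ht.2

theorem StarConvex.differentiableOn_integral_smul_comp {E : Type*} [NormedAddCommGroup E]
    [NormedSpace ℂ E] [CompleteSpace E] {U : Set ℂ} {c : ℂ}
    (hcU : StarConvex ℝ c U) (hU : IsOpen U) {g : ℂ → E} (hg : DifferentiableOn ℂ g U)
    {k : ℝ → ℝ} (hk : IntervalIntegrable k volume 0 1) :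
    DifferentiableOn ℂ (fun z => ∫ t in (0:ℝ)..1, k t • g (c + t * (z - c))) U := by
  intro z₀ hz₀
  obtain ⟨ε, hε, hballU⟩ := Metric.isOpen_iff.1 hU z₀ hz₀
  have hcloseU : closedBall z₀ (ε / 2) ⊆ U :=
    (closedBall_subset_ball (half_lt_self hε)).trans hballU
  -- `|g'|` is bounded on the compact set `K` swept out by the segments from `c` to a closed ball
  -- around `z₀`; this dominates the `z`-derivative of the integrand.
  set K := (fun p : ℝ × ℂ => c + p.1 * (p.2 - c)) '' (Icc 0 1 ×ˢ closedBall z₀ (ε / 2))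
  have hKU : K ⊆ U := by
    rintro _ ⟨⟨t, z⟩, ⟨ht, hz⟩, rfl⟩
    simpa [real_smul] using hcU.add_smul_sub_mem (hcloseU hz) ht.1 ht.2
  obtain ⟨B, hB⟩ := ((isCompact_Icc.prod (isCompact_closedBall _ _)).image
    (by fun_prop)).exists_bound_of_continuousOn ((hg.deriv hU).continuousOn.mono hKU)
  have hderiv := intervalIntegral.hasDerivAt_integral_of_dominated_loc_of_deriv_le
    (F' := fun z t => k t • ((t : ℂ) • deriv g (c + t * (z - c))))
    (bound := fun t => ‖k t‖ * B) (ball_mem_nhds z₀ (half_pos hε))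
    (Filter.eventually_of_mem (hU.mem_nhds hz₀) fun z hz =>
      (hk.smul_continuousOn
        (hcU.continuousOn_comp_segment hg.continuousOn hz)).def'.aestronglyMeasurable)
    (hk.smul_continuousOn (hcU.continuousOn_comp_segment hg.continuousOn hz₀))
    (hk.smul_continuousOn ((continuous_ofReal.continuousOn).smul
      (hcU.continuousOn_comp_segment (hg.deriv hU).continuousOn hz₀))).def'.aestronglyMeasurable
    (ae_of_all _ fun t ht z hz => ?_) (hk.norm.mul_const B) (ae_of_all _ fun t ht z hz => ?_)
  · exact hderiv.2.differentiableAt.differentiableWithinAt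
  · have ht' : t ∈ Icc (0:ℝ) 1 := Ioc_subset_Icc_self (by simpa using ht)
    have hw : c + t * (z - c) ∈ K := ⟨(t, z), ⟨ht', ball_subset_closedBall hz⟩, rfl⟩
    rw [norm_smul, norm_smul, norm_real, Real.norm_of_nonneg ht'.1]
    gcongr
    simpa using mul_le_mul ht'.2 (hB _ hw) (norm_nonneg _) zero_le_one
  · have ht' : t ∈ Icc (0:ℝ) 1 := Ioc_subset_Icc_self (by simpa using ht)
    have hw : c + t * (z - c) ∈ U := hKU ⟨(t, z), ⟨ht', ball_subset_closedBall hz⟩, rfl⟩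
    have hinner : HasDerivAt (fun z : ℂ => c + t * (z - c)) (t : ℂ) z := by
      simpa using ((hasDerivAt_id z).sub_const c).const_mul (t : ℂ) |>.const_add c
    exact ((hg.differentiableAt (hU.mem_nhds hw)).hasDerivAt.scomp z hinner).const_smul (k t)

theorem Complex.not_im_eq_zero_and_re_le_iff {z : ℂ} {x : ℝ} :
    ¬(z.im = 0 ∧ z.re ≤ x) ↔ z - x ∈ slitPlane := by
  rw [mem_slitPlane_iff]
  simp only [sub_re, ofReal_re, sub_im, ofReal_im, sub_zero, sub_pos, not_and_or, not_le]
  tauto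

theorem Complex.ofReal_mul_cpow {t : ℝ} (ht : 0 ≤ t) (u r : ℂ) :
    ((t : ℂ) * u) ^ r = (t : ℂ) ^ r * u ^ r := by
  rcases eq_or_ne r 0 with rfl | hr
  · simp
  rcases ht.eq_or_lt with rfl | ht
  · simp [zero_cpow hr]
  rcases eq_or_ne u 0 with rfl | hu
  · simp [zero_cpow hr]
  have ht' : (t : ℂ) ≠ 0 := ofReal_ne_zero.2 ht.ne'
  rw [cpow_def_of_ne_zero (mul_ne_zero ht' hu), log_ofReal_mul ht hu, add_mul, exp_add,
    ofReal_log ht.le, ← cpow_def_of_ne_zero ht', ← cpow_def_of_ne_zero hu]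

theorem integral_sqrt_zero_one : ∫ t in (0:ℝ)..1, √t = 2 / 3 := by
  simp only [Real.sqrt_eq_rpow]
  rw [integral_rpow (Or.inl (by norm_num))]
  norm_num

noncomputable def polyDivSqrt (P : Polynomial ℝ) (w : ℂ) : ℂ :=
  Polynomial.aeval w P / w ^ ((1:ℂ)/2)

theorem Polynomial.complex_aeval_one (P : Polynomial ℝ) : aeval (1:ℂ) P = P.eval 1 := by
  simp [aeval_def, eval₂_at_one]

theorem polyDivSqrt_one (P : Polynomial ℝ) : polyDivSqrt P 1 = P.eval 1 := by
  simp [polyDivSqrt, Polynomial.complex_aeval_one]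

theorem differentiableOn_polyDivSqrt (P : Polynomial ℝ) :
    DifferentiableOn ℂ (polyDivSqrt P) slitPlane := fun _ hw =>
  ((P.differentiable_aeval _).div (differentiableAt_id.cpow_const (c := (1:ℂ)/2) hw)
    (by simp [cpow_eq_zero_iff, slitPlane_ne_zero hw])).differentiableWithinAt

theorem norm_polyDivSqrt_le {P : Polynomial ℝ} {M : ℝ}
    (hM : ∀ w ∈ ball (1:ℂ) (1/2), ‖Polynomial.aeval w P‖ ≤ M)
    {w : ℂ} (hw : w ∈ ball (1:ℂ) (1/2)) : ‖polyDivSqrt P w‖ ≤ 2 * M := by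
  have hw' : 1 / 2 < ‖w‖ := by
    have := norm_sub_norm_le (1:ℂ) (1 - w)
    rw [mem_ball_iff_norm', sub_sub_cancel] at *
    norm_num at this
    linarith
  have hsqrt : 1 / 2 ≤ ‖w ^ ((1:ℂ)/2)‖ := by
    rw [show ((1:ℂ)/2) = ((1/2 : ℝ) : ℂ) by norm_num, norm_cpow_real, ← Real.sqrt_eq_rpow]
    exact Real.le_sqrt_of_sq_le (by linarith)
  rw [polyDivSqrt, norm_div, div_le_iff₀ (by linarith), mul_comm]
  calc ‖Polynomial.aeval w P‖ ≤ M := hM w hw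
    _ ≤ ‖w ^ ((1:ℂ)/2)‖ * (2 * M) := by nlinarith [(norm_nonneg _).trans (hM w hw)]

theorem norm_polyDivSqrt_sub_le {P : Polynomial ℝ} {M : ℝ}
    (hM : ∀ w ∈ ball (1:ℂ) (1/2), ‖Polynomial.aeval w P‖ ≤ M)
    {w : ℂ} (hw : w ∈ ball (1:ℂ) (1/2)) :
    ‖polyDivSqrt P w - P.eval 1‖ ≤ 8 * M * ‖w - 1‖ := by
  have hball : ball (1:ℂ) (1/2) ⊆ slitPlane := fun w hw => by
    rw [mem_ball_iff_norm] at hw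
    simpa using mem_slitPlane_of_norm_lt_one (z := w - 1) (by linarith)
  have hmaps : MapsTo (polyDivSqrt P) (ball 1 (1/2)) (closedBall (polyDivSqrt P 1) (4 * M)) :=
    fun v hv => by
      rw [mem_closedBall_iff_norm]
      calc _ ≤ ‖polyDivSqrt P v‖ + ‖polyDivSqrt P 1‖ := norm_sub_le _ _
        _ ≤ 2 * M + 2 * M := add_le_add (norm_polyDivSqrt_le hM hv)
            (norm_polyDivSqrt_le hM (mem_ball_self (by norm_num)))
        _ = 4 * M := by ring
  have := dist_le_div_mul_dist_of_mapsTo_ball ((differentiableOn_polyDivSqrt P).mono hball)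
    hmaps hw
  rwa [polyDivSqrt_one, dist_eq_norm, dist_eq_norm, div_div_eq_mul_div, div_one,
    mul_comm (4 * M), ← mul_assoc, show (2:ℝ) * 4 = 8 by norm_num] at this

noncomputable def phiHatExt (P : Polynomial ℝ) (z : ℂ) : ℂ :=
  3 / (2 * ((P.eval 1 : ℝ) : ℂ)) * ∫ t in (0:ℝ)..1, √t • polyDivSqrt P (1 + t * (z - 1))

theorem differentiableOn_phiHatExt (P : Polynomial ℝ) :
    DifferentiableOn ℂ (phiHatExt P) slitPlane :=
  (starConvex_one_slitPlane.differentiableOn_integral_smul_comp isOpen_slitPlane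
    (differentiableOn_polyDivSqrt P) (Real.continuous_sqrt.intervalIntegrable 0 1)).const_mul _

theorem phiHatExt_eq_phiHat {P : Polynomial ℝ} {z : ℂ}
    (hz : z - 1 ∈ slitPlane) : phiHatExt P z = phiHat P z := by
  set J := ∫ t in (0:ℝ)..1, √t • polyDivSqrt P (1 + t * (z - 1)) with hJ
  have hz0 : z - 1 ≠ 0 := slitPlane_ne_zero hz
  have hψ : ∀ t ∈ uIcc (0:ℝ) 1, psiFun P (1 + t * (z - 1)) =
      (2 * Real.pi * I)⁻¹ * (z - 1) ^ ((1:ℂ)/2) * (√t • polyDivSqrt P (1 + t * (z - 1))) := by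
    intro t ht
    have ht0 : 0 ≤ t := by
      rw [uIcc_of_le zero_le_one] at ht
      exact ht.1
    rw [psiFun, polyDivSqrt, add_sub_cancel_left, ofReal_mul_cpow ht0, real_smul,
      Real.sqrt_eq_rpow, ofReal_cpow ht0]
    push_cast
    ring
  have hxi : xiFun P z = -(1/2) * (z - 1) ^ ((3:ℂ)/2) * J := by
    rw [xiFun, intervalIntegral.integral_congr hψ, intervalIntegral.integral_const_mul, ← hJ,
      show ((3:ℂ)/2) = 1 + 1/2 by norm_num, cpow_add _ _ hz0, cpow_one]
    field_simp
  have hcpow : (z - 1) ^ ((3:ℂ)/2) ≠ 0 := by simp [cpow_eq_zero_iff, hz0]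
  rw [phiHat, hxi, phiHatExt]
  field_simp
  ring

theorem phiHatExt_one {P : Polynomial ℝ} (hP : P.eval 1 ≠ 0) : phiHatExt P 1 = 1 := by
  have hP' : ((P.eval 1 : ℝ) : ℂ) ≠ 0 := ofReal_ne_zero.2 hP
  simp only [phiHatExt, sub_self, mul_zero, add_zero, polyDivSqrt_one]
  rw [intervalIntegral.integral_smul_const, integral_sqrt_zero_one, real_smul]
  push_cast
  field_simp

theorem phiHatExt_sub_one {P : Polynomial ℝ} (hP : P.eval 1 ≠ 0) {z : ℂ} (hz : z ∈ slitPlane) :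
    phiHatExt P z - 1 = 3 / (2 * ((P.eval 1 : ℝ) : ℂ)) *
      ∫ t in (0:ℝ)..1, √t • (polyDivSqrt P (1 + t * (z - 1)) - P.eval 1) := by
  have hsqrt : IntervalIntegrable (fun t => √t) volume 0 1 :=
    Real.continuous_sqrt.intervalIntegrable 0 1
  have hg : IntervalIntegrable (fun t : ℝ => √t • polyDivSqrt P (1 + t * (z - 1))) volume 0 1 :=
    hsqrt.smul_continuousOn (starConvex_one_slitPlane.continuousOn_comp_segment
      (differentiableOn_polyDivSqrt P).continuousOn hz)
  simp_rw [smul_sub]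
  rw [intervalIntegral.integral_sub hg (hsqrt.smul_continuousOn continuousOn_const), mul_sub,
    ← phiHatExt, intervalIntegral.integral_smul_const, integral_sqrt_zero_one, real_smul]
  have hP' : ((P.eval 1 : ℝ) : ℂ) ≠ 0 := ofReal_ne_zero.2 hP
  push_cast
  field_simp

theorem norm_phiHatExt_sub_one_le {P : Polynomial ℝ} {h₀ M : ℝ} (hh₀ : 0 < h₀)
    (hP : h₀ ≤ P.eval 1) (hM : ∀ w ∈ ball (1:ℂ) (1/2), ‖Polynomial.aeval w P‖ ≤ M)
    {z : ℂ} (hz : ‖z - 1‖ ≤ 1/4) :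
    ‖phiHatExt P z - 1‖ ≤ 12 * M / h₀ * ‖z - 1‖ := by
  have hP_pos : 0 < P.eval 1 := hh₀.trans_le hP
  have hM_nonneg : 0 ≤ M := (norm_nonneg _).trans (hM 1 (mem_ball_self (by norm_num)))
  have hzs : z ∈ slitPlane := by
    simpa using mem_slitPlane_of_norm_lt_one (z := z - 1) (by linarith)
  have hbound : ∀ t ∈ uIoc (0:ℝ) 1,
      ‖√t • (polyDivSqrt P (1 + t * (z - 1)) - P.eval 1)‖ ≤ 8 * M * ‖z - 1‖ := by
    intro t ht
    rw [uIoc_of_le zero_le_one] at ht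
    have hseg : ‖(1 + t * (z - 1)) - 1‖ ≤ ‖z - 1‖ := by
      rw [add_sub_cancel_left, norm_mul, norm_real, Real.norm_of_nonneg ht.1.le]
      exact mul_le_of_le_one_left (norm_nonneg _) ht.2
    have hw : 1 + t * (z - 1) ∈ ball (1:ℂ) (1/2) := by
      rw [mem_ball_iff_norm]; linarith
    rw [norm_smul, Real.norm_of_nonneg (Real.sqrt_nonneg t)]
    calc √t * ‖polyDivSqrt P (1 + t * (z - 1)) - P.eval 1‖
        ≤ 1 * (8 * M * ‖z - 1‖) := by
          gcongr
          · exact Real.sqrt_le_one.2 ht.2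
          · exact (norm_polyDivSqrt_sub_le hM hw).trans (by gcongr)
      _ = 8 * M * ‖z - 1‖ := one_mul _
  have hcoef : ‖3 / (2 * ((P.eval 1 : ℝ) : ℂ))‖ ≤ 3 / (2 * h₀) := by
    rw [norm_div, norm_mul, norm_real, Real.norm_of_nonneg hP_pos.le]
    norm_num
    gcongr
  rw [phiHatExt_sub_one hP_pos.ne' hzs, norm_mul]
  calc _ ≤ 3 / (2 * h₀) * (8 * M * ‖z - 1‖ * |1 - 0|) :=
        mul_le_mul hcoef (intervalIntegral.norm_integral_le_of_norm_le_const hbound)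
          (norm_nonneg _) (by positivity)
    _ = 12 * M / h₀ * ‖z - 1‖ := by
        field_simp
        norm_num
        ring

/-- for a family of real polynomials `h_n` bounded uniformly on
compact sets with `h_n(1) ≥ h₀ > 0`, the functions `φ̂_n`, a priori defined on
`ℂ\(-∞,1]`, extend analytically to `ℂ\(-∞,0]`, take value `1` at `z = 1`, and
satisfy `|φ̂_n(z) - 1| ≤ C|z-1|` for `|z-1| ≤ 1/4` with `C` independent of `n`. -/
theorem phiHat_extension_estimate (hpoly : ℕ → Polynomial ℝ) (h₀ : ℝ)
    (hh₀ : 0 < h₀) (hge : ∀ n, h₀ ≤ (hpoly n).eval 1)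
    (hbdd : ∀ K : Set ℂ, IsCompact K → ∃ M : ℝ,
      ∀ n, ∀ z ∈ K, ‖Polynomial.aeval z (hpoly n)‖ ≤ M) :
    ∃ F : ℕ → ℂ → ℂ,
      (∀ n, DifferentiableOn ℂ (F n) {z : ℂ | ¬(z.im = 0 ∧ z.re ≤ 0)} ∧
        (∀ z : ℂ, ¬(z.im = 0 ∧ z.re ≤ 1) → F n z = phiHat (hpoly n) z) ∧
        F n 1 = 1) ∧
      ∃ C : ℝ, 0 < C ∧ ∀ n, ∀ z : ℂ, ‖z - 1‖ ≤ 1/4 →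
        ‖F n z - 1‖ ≤ C * ‖z - 1‖ := by
  have hP1 : ∀ n, (hpoly n).eval 1 ≠ 0 := fun n => (hh₀.trans_le (hge n)).ne'
  obtain ⟨M, hM⟩ := hbdd (closedBall 1 (1/2)) (isCompact_closedBall _ _)
  have hMball : ∀ n, ∀ w ∈ ball (1:ℂ) (1/2), ‖Polynomial.aeval w (hpoly n)‖ ≤ M :=
    fun n w hw => hM n w (ball_subset_closedBall hw)
  have hM_pos : 0 < M := by
    have h1 := hM 0 1 (mem_closedBall_self (by norm_num))
    rw [Polynomial.complex_aeval_one, norm_real, Real.norm_eq_abs] at h1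
    linarith [hh₀.trans_le (hge 0), le_abs_self ((hpoly 0).eval 1)]
  refine ⟨fun n => phiHatExt (hpoly n), fun n => ⟨?_, fun z hz => ?_, phiHatExt_one (hP1 n)⟩,
    12 * M / h₀, by positivity, fun n z hz => norm_phiHatExt_sub_one_le hh₀ (hge n) (hMball n) hz⟩
  · exact (differentiableOn_phiHatExt _).mono fun z hz => by
      simpa using not_im_eq_zero_and_re_le_iff.1 hz
  · exact phiHatExt_eq_phiHat (not_im_eq_zero_and_re_le_iff.1 (by simpa using hz))
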